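/- Let σ₀ > 0 (the noise power N₀W), P ≥ 0, h ≥ 0, L > 0, and set γ = P·h/σ₀. Suppose real numbers ς, η, a, b satisfy exp(ς) ≤ L, exp(η) ≤ σ₀ + P·h, P·h ≤ exp(a), and 2σ₀ + P·h ≤ exp(b). Then √(γ(γ+2)) / (√L · (1+γ)) ≤ exp(a/2 + b/2 - η - ς/2). Consequently, for any constant c ≥ 0, log₂(1+γ) - c·√(2γ(γ+2)) / (√L·(1+γ)) ≥ log₂(1+γ) - c·√2·exp(a/2 + b/2 - η - ς/2). -/

import Mathlib

/-!
Clearing `σ₀` turns the left side into `√(Ph(Ph + 2σ₀)) / (√L (σ₀ + Ph))`; the constraints bound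
the numerator by `√(eᵃ eᵇ)` and the denominator from below by `e^{ς/2} e^η`.
-/

open Real

lemma exp_half_le_sqrt {x y : ℝ} (h : exp x ≤ y) : exp (x / 2) ≤ √y :=
  exp_half x ▸ sqrt_le_sqrt h

lemma sqrt_mul_le_exp_add_half {u v a b : ℝ} (hu : u ≤ exp a) (hv : v ≤ exp b) (hv₀ : 0 ≤ v) :
    √(u * v) ≤ exp (a / 2 + b / 2) := by
  rw [← add_div, exp_half, exp_add]
  exact sqrt_le_sqrt (mul_le_mul hu hv hv₀ (exp_pos a).le)

lemma sqrt_snr_div_eq {s x L : ℝ} (hs : 0 < s) :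
    √(x / s * (x / s + 2)) / (√L * (1 + x / s)) = √(x * (x + 2 * s)) / (√L * (s + x)) := by
  have hsq : x / s * (x / s + 2) = x * (x + 2 * s) / s ^ 2 := by field_simp
  rw [hsq, sqrt_div' _ (sq_nonneg s), sqrt_sq hs.le, one_add_div hs.ne']
  field_simp

theorem rp_rate_lower_bound_general
    (σ₀ P h L ς η a b : ℝ)
    (hσ₀ : 0 < σ₀) (hP : 0 ≤ P) (hh : 0 ≤ h)
    (γ : ℝ) (hγ : γ = P * h / σ₀)
    (hς : Real.exp ς ≤ L)
    (hη : Real.exp η ≤ σ₀ + P * h)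
    (ha : P * h ≤ Real.exp a)
    (hb : 2 * σ₀ + P * h ≤ Real.exp b) :
    Real.sqrt (γ * (γ + 2)) / (Real.sqrt L * (1 + γ)) ≤
      Real.exp (a / 2 + b / 2 - η - ς / 2) ∧
    ∀ c : ℝ, 0 ≤ c →
      Real.logb 2 (1 + γ) -
          c * Real.sqrt (2 * γ * (γ + 2)) / (Real.sqrt L * (1 + γ)) ≥
        Real.logb 2 (1 + γ) -
          c * Real.sqrt 2 * Real.exp (a / 2 + b / 2 - η - ς / 2) := by
  have hx : 0 ≤ P * h := mul_nonneg hP hh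
  have key : √(γ * (γ + 2)) / (√L * (1 + γ)) ≤ exp (a / 2 + b / 2 - η - ς / 2) := by
    have hnum : √(P * h * (P * h + 2 * σ₀)) ≤ exp (a / 2 + b / 2) :=
      sqrt_mul_le_exp_add_half ha (by linarith) (by linarith)
    have hden : exp (ς / 2) * exp η ≤ √L * (σ₀ + P * h) :=
      mul_le_mul (exp_half_le_sqrt hς) hη (exp_pos η).le (sqrt_nonneg L)
    calc √(γ * (γ + 2)) / (√L * (1 + γ))
        = √(P * h * (P * h + 2 * σ₀)) / (√L * (σ₀ + P * h)) := hγ ▸ sqrt_snr_div_eq hσ₀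
      _ ≤ exp (a / 2 + b / 2) / (exp (ς / 2) * exp η) :=
          div_le_div₀ (exp_pos _).le hnum (by positivity) hden
      _ = exp (a / 2 + b / 2 - η - ς / 2) := by
          rw [← exp_add, ← exp_sub]; ring_nf
  refine ⟨key, fun c hc => sub_le_sub_left ?_ _⟩
  calc c * √(2 * γ * (γ + 2)) / (√L * (1 + γ))
      = c * √2 * (√(γ * (γ + 2)) / (√L * (1 + γ))) := by
        rw [mul_assoc 2, sqrt_mul zero_le_two]; ring
    _ ≤ c * √2 * exp (a / 2 + b / 2 - η - ς / 2) := by gcongr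

/-- The auxiliary-variable constraints of the relaxed problem RP give a valid
lower bound on the finite-blocklength rate: with `γ = P·h/σ₀`,
`√(γ(γ+2))/(√L·(1+γ)) ≤ exp(a/2 + b/2 - η - ς/2)`, and hence for every `c ≥ 0`
the rate `log₂(1+γ) - c·√(2γ(γ+2))/(√L·(1+γ))` is bounded below by
`log₂(1+γ) - c·√2·exp(a/2 + b/2 - η - ς/2)`. -/
theorem rp_rate_lower_bound
    (σ₀ P h L ς η a b : ℝ)
    (hσ₀ : 0 < σ₀) (hP : 0 ≤ P) (hh : 0 ≤ h) (hL : 0 < L)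
    (γ : ℝ) (hγ : γ = P * h / σ₀)
    (hς : Real.exp ς ≤ L)
    (hη : Real.exp η ≤ σ₀ + P * h)
    (ha : P * h ≤ Real.exp a)
    (hb : 2 * σ₀ + P * h ≤ Real.exp b) :
    Real.sqrt (γ * (γ + 2)) / (Real.sqrt L * (1 + γ)) ≤
      Real.exp (a / 2 + b / 2 - η - ς / 2) ∧
    ∀ c : ℝ, 0 ≤ c →
      Real.logb 2 (1 + γ) -
          c * Real.sqrt (2 * γ * (γ + 2)) / (Real.sqrt L * (1 + γ)) ≥
        Real.logb 2 (1 + γ) -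
          c * Real.sqrt 2 * Real.exp (a / 2 + b / 2 - η - ς / 2) :=
  rp_rate_lower_bound_general σ₀ P h L ς η a b hσ₀ hP hh γ hγ hς hη ha hb
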